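/- arXiv:1301.4748 — 5 statements merged into one kernel-verified Lean document; each statement's English description precedes it below -/
import Mathlib

section
/- Complex linearity of v ↦ L_v j (stated after Lemma 2.14 and used again in the proof of Lemma 8.1): Let E be a complex normed vector space and let v, W : E → E be vector fields that are differentiable over ℝ at a point z. Then (L_{Complex.I • v} J)(W)(z) = Complex.I • ((L_v J)(W)(z)); that is, L_{jv} j = j ∘ L_v j. -/
/-! `L_v J` is tensorial in `W`: it is the commutator `[J, Dv]` applied to `W`, with no derivative
of `W` left. Replacing `v` by `Jv` replaces `Dv` by `J ∘ Dv`, and `[J, J ∘ Dv] = J ∘ [J, Dv]`. -/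

open VectorField

/-- The Lie derivative of the standard complex structure `J = Complex.I • ·`
along the vector field `v`, evaluated on the vector field `W`:
`(L_v J)(W) := [v, J ∘ W] - J ∘ [v, W]`. -/
noncomputable def lieDerivJ {E : Type*} [NormedAddCommGroup E] [NormedSpace ℂ E]
    (v W : E → E) : E → E :=
  fun z =>
    lieBracket ℝ v (fun x => Complex.I • W x) z - Complex.I • lieBracket ℝ v W z

theorem fderiv_fun_const_smul_field {𝕜 R E F : Type*} [NontriviallyNormedField 𝕜]
    [NormedAddCommGroup E] [NormedSpace 𝕜 E] [NormedAddCommGroup F] [NormedSpace 𝕜 F]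
    [DivisionSemiring R] [Module R F] [SMulCommClass 𝕜 R F] [ContinuousConstSMul R F]
    (c : R) (f : E → F) (x : E) :
    fderiv 𝕜 (fun y => c • f y) x = c • fderiv 𝕜 f x :=
  congrFun (fderiv_const_smul_field c) x

theorem lieDerivJ_eq_commutator {E : Type*} [NormedAddCommGroup E] [NormedSpace ℂ E]
    (v W : E → E) (z : E) :
    lieDerivJ v W z = Complex.I • fderiv ℝ v z (W z) - fderiv ℝ v z (Complex.I • W z) := by
  rw [lieDerivJ, lieBracket, lieBracket, fderiv_fun_const_smul_field,
    smul_apply, smul_sub]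
  abel

theorem lieDerivJ_smul_I_general {E : Type*} [NormedAddCommGroup E] [NormedSpace ℂ E]
    (v W : E → E) (z : E) :
    lieDerivJ (fun x => Complex.I • v x) W z = Complex.I • lieDerivJ v W z := by
  rw [lieDerivJ_eq_commutator, lieDerivJ_eq_commutator, fderiv_fun_const_smul_field,
    smul_apply, smul_apply, smul_sub]

/-- Complex linearity of `v ↦ L_v j`: one has `L_{jv} j = j ∘ L_v j`. -/
theorem lieDerivJ_smul_I {E : Type*} [NormedAddCommGroup E] [NormedSpace ℂ E]
    (v W : E → E) (z : E)
    (hv : DifferentiableAt ℝ v z) (hW : DifferentiableAt ℝ W z) :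
    lieDerivJ (fun x => Complex.I • v x) W z = Complex.I • lieDerivJ v W z :=
  lieDerivJ_smul_I_general v W z
end

section
/- Product step in the proof of Lemma 2.14 ('j ∘ ∇(he) − (∇(he)) ∘ j = j ∘ 2(∂̄h)e'): Let E be a complex normed vector space, let e : E → E be differentiable over ℂ at a point z, let h : E → ℂ be differentiable over ℝ at z, let W : E → E be differentiable over ℝ at z, and set v x := h x • e x. Then (L_v J)(W)(z) = (Complex.I * (fderiv ℝ h z)(W z) − (fderiv ℝ h z)(Complex.I • W z)) • e z, and this scalar coefficient equals 2 * Complex.I * ((∂̄ h)(z)(W z)). -/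
open VectorField

/-- The antiholomorphic part of the real derivative of a function `h : E → ℂ`
at `z`, applied to `w`. -/
noncomputable def dbarFun {E : Type*} [NormedAddCommGroup E] [NormedSpace ℂ E]
    (h : E → ℂ) (z : E) (w : E) : ℂ :=
  (1 / 2 : ℂ) * ((fderiv ℝ h z) w + Complex.I * (fderiv ℝ h z) (Complex.I • w))

/-!
The Lie derivative of `J` along `v` is the commutator `J ∘ Dv - Dv ∘ J`: the terms of
`[v, J W]` and `J [v, W]` involving `DW` cancel. For `v = h • e` the Leibniz rule splits
`Dv` into `h • De`, which commutes with `J` since `e` is holomorphic, and `Dh ⊗ e`, whose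
commutator with `J` is `2 I ∂̄h ⊗ e`.
-/

open Complex ContinuousLinearMap

section

variable {E F : Type*} [NormedAddCommGroup E] [NormedSpace ℂ E]
  [NormedAddCommGroup F] [NormedSpace ℂ F]

noncomputable def commJ (L : E →L[ℝ] F) (w : E) : F :=
  I • L w - L (I • w)

lemma commJ_add (L M : E →L[ℝ] F) (w : E) :
    commJ (L + M) w = commJ L w + commJ M w := by
  simp only [commJ, add_apply, smul_add]
  abel

lemma commJ_smul (c : ℂ) (L : E →L[ℝ] F) (w : E) :
    commJ (c • L) w = c • commJ L w := by
  simp only [commJ, smul_apply, smul_sub, smul_comm I c]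

lemma commJ_restrictScalars (L : E →L[ℂ] F) (w : E) :
    commJ (L.restrictScalars ℝ) w = 0 := by
  simp [commJ]

lemma commJ_smulRight (L : E →L[ℝ] ℂ) (f : F) (w : E) :
    commJ (L.smulRight f) w = commJ L w • f := by
  simp only [commJ, smulRight_apply, smul_eq_mul, sub_smul, mul_smul]

lemma lieDerivJ_eq_commJ_fderiv (v W : E → E) (z : E) :
    lieDerivJ v W z = commJ (fderiv ℝ v z) (W z) := by
  have hJW : fderiv ℝ (fun x => I • W x) z = I • fderiv ℝ W z :=
    congrFun (fderiv_const_smul_field (𝕜 := ℝ) (f := W) I) z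
  simp only [lieDerivJ, lieBracket, commJ, hJW, smul_apply, smul_sub]
  abel

lemma commJ_fderiv_eq_two_mul_I_mul_dbarFun (h : E → ℂ) (z w : E) :
    commJ (fderiv ℝ h z) w = 2 * I * dbarFun h z w := by
  simp only [commJ, dbarFun, smul_eq_mul]
  linear_combination (-fderiv ℝ h z (I • w)) * I_mul_I

lemma commJ_fderiv_smul_holomorphic {e : E → F} {h : E → ℂ} {z : E}
    (he : DifferentiableAt ℂ e z) (hh : DifferentiableAt ℝ h z) (w : E) :
    commJ (fderiv ℝ (fun x => h x • e x) z) w = commJ (fderiv ℝ h z) w • e z := by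
  rw [fderiv_fun_smul hh (he.restrictScalars ℝ), he.fderiv_restrictScalars ℝ, commJ_add,
    commJ_smul, commJ_restrictScalars, smul_zero, zero_add, commJ_smulRight]

end

theorem lieDerivJ_smul_holomorphic_general {E : Type*} [NormedAddCommGroup E]
    [NormedSpace ℂ E] (e : E → E) (h : E → ℂ) (W : E → E) (z : E)
    (he : DifferentiableAt ℂ e z) (hh : DifferentiableAt ℝ h z) :
    lieDerivJ (fun x => h x • e x) W z
        = (Complex.I * (fderiv ℝ h z) (W z)
            - (fderiv ℝ h z) (Complex.I • W z)) • e z ∧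
      Complex.I * (fderiv ℝ h z) (W z) - (fderiv ℝ h z) (Complex.I • W z)
        = 2 * Complex.I * dbarFun h z (W z) :=
  ⟨(lieDerivJ_eq_commJ_fderiv _ W z).trans (commJ_fderiv_smul_holomorphic he hh (W z)),
    commJ_fderiv_eq_two_mul_I_mul_dbarFun h z (W z)⟩

/-- Product step in the proof of Lemma 2.14: for `v = h • e` with `e` holomorphic
and `h : E → ℂ`, one has
`(L_v J)(W)(z) = (I * Dh(z)(W z) - Dh(z)(I • W z)) • e z`, and this scalar
coefficient equals `2 * I * (∂̄ h)(z)(W z)`. -/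
theorem lieDerivJ_smul_holomorphic {E : Type*} [NormedAddCommGroup E]
    [NormedSpace ℂ E] (e : E → E) (h : E → ℂ) (W : E → E) (z : E)
    (he : DifferentiableAt ℂ e z) (hh : DifferentiableAt ℝ h z)
    (hW : DifferentiableAt ℝ W z) :
    lieDerivJ (fun x => h x • e x) W z
        = (Complex.I * (fderiv ℝ h z) (W z)
            - (fderiv ℝ h z) (Complex.I • W z)) • e z ∧
      Complex.I * (fderiv ℝ h z) (W z) - (fderiv ℝ h z) (Complex.I • W z)
        = 2 * Complex.I * dbarFun h z (W z) :=
  lieDerivJ_smul_holomorphic_general e h W z he hh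
end

section
/- Higher-order consequence of Claim 2.17 ('if a section vanishes at t = 0 to order n − 1, then it is equal to t^n times a smooth section'): Let E be a real normed vector space, F a real Banach space, n a positive natural number, and ν : E × ℝ → F smooth (ContDiff ℝ ∞). If for every x ∈ E and every k < n the k-th iterated derivative of the function t ↦ ν(x, t) vanishes at t = 0, then there exists a smooth ν' : E × ℝ → F such that ν(x, t) = t^n • ν'(x, t) for all x ∈ E and t ∈ ℝ. -/
/-!
Hadamard's lemma with parameters: `ν(x, t) = ν(x, 0) + t • ∫₀¹ ∂ₜν(x, s t) ds`, and the integral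
is smooth in `(x, t)` by differentiation under the integral sign. If the `t`-derivatives of `ν` of
order `< n + 1` vanish at `t = 0`, then `ν = t • ν₁` and Leibniz's rule
`∂ₜᵏ⁺¹(t • ν₁)(0) = (k + 1) • ∂ₜᵏν₁(0)` shows that those of `ν₁` of order `< n` vanish, so
induction on `n` gives `ν = tⁿ • ν'`.
-/

open scoped ContDiff

open Set Filter Topology

universe u v

section ParametricIntegral

variable {X : Type u} [NormedAddCommGroup X] [NormedSpace ℝ X]

theorem hasFDerivAt_parametric_intervalIntegral {F : Type v} [NormedAddCommGroup F]
    [NormedSpace ℝ F] {f : X × ℝ → F} (hf : ContDiff ℝ 1 f) (a b : ℝ) (x₀ : X) :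
    HasFDerivAt (fun x => ∫ u in a..b, f (x, u))
      (∫ u in a..b, fderiv ℝ f (x₀, u) ∘L ContinuousLinearMap.inl ℝ X ℝ) x₀ := by
  set f' : X × ℝ → X →L[ℝ] F := fun p => fderiv ℝ f p ∘L ContinuousLinearMap.inl ℝ X ℝ
  have hf' : Continuous f' := (hf.continuous_fderiv one_ne_zero).clm_comp continuous_const
  have hslice (x : X) : Continuous fun u : ℝ => (x, u) := continuous_const.prodMk continuous_id
  obtain ⟨M, hM⟩ :=
    isCompact_uIcc.exists_bound_of_continuousOn (hf'.comp (hslice x₀)).continuousOn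
  have hbound : ∀ᶠ x in 𝓝 x₀, ∀ u ∈ uIcc a b, ‖f' (x, u)‖ < M + 1 :=
    isCompact_uIcc.eventually_forall_of_forall_eventually fun u hu =>
      hf'.norm.continuousAt.eventually_lt continuousAt_const ((hM u hu).trans_lt (lt_add_one M))
  refine intervalIntegral.hasFDerivAt_integral_of_dominated_of_fderiv_le
    (bound := fun _ => M + 1) hbound
    (Eventually.of_forall fun x => (hf.continuous.comp (hslice x)).aestronglyMeasurable)
    ((hf.continuous.comp (hslice x₀)).intervalIntegrable a b)
    (hf'.comp (hslice x₀)).aestronglyMeasurable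
    (Eventually.of_forall fun u hu x hx => (hx u (uIoc_subset_uIcc hu)).le)
    intervalIntegrable_const
    (Eventually.of_forall fun u _ x _ => ?_)
  exact (hf.differentiable one_ne_zero (x, u)).hasFDerivAt.comp x (hasFDerivAt_prodMk_left x u)

-- `F` lives in `max u v` so that the induction can pass to `X →L[ℝ] F`.
private theorem contDiff_parametric_intervalIntegral_aux (a b : ℝ) (n : ℕ) :
    ∀ {F : Type max u v} [NormedAddCommGroup F] [NormedSpace ℝ F] {f : X × ℝ → F},
      ContDiff ℝ n f → ContDiff ℝ n fun x => ∫ u in a..b, f (x, u) := by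
  induction n with
  | zero =>
    intro F _ _ f hf
    rw [Nat.cast_zero, contDiff_zero] at hf ⊢
    exact intervalIntegral.continuous_parametric_intervalIntegral_of_continuous'
      (f := fun x u => f (x, u)) hf a b
  | succ n ih =>
    intro F _ _ f hf
    have hf₁ : ContDiff ℝ 1 f := hf.of_le (mod_cast Nat.le_add_left 1 n)
    rw [Nat.cast_succ, contDiff_succ_iff_fderiv] at hf ⊢
    refine ⟨fun x => (hasFDerivAt_parametric_intervalIntegral hf₁ a b x).differentiableAt,
      by simp, ?_⟩
    rw [funext fun x => (hasFDerivAt_parametric_intervalIntegral hf₁ a b x).fderiv]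
    exact ih (hf.2.2.clm_comp contDiff_const)

theorem contDiff_parametric_intervalIntegral {F : Type v} [NormedAddCommGroup F]
    [NormedSpace ℝ F] {n : ℕ∞} {f : X × ℝ → F} (hf : ContDiff ℝ n f) (a b : ℝ) :
    ContDiff ℝ n fun x => ∫ u in a..b, f (x, u) := by
  let e : ULift.{u} F ≃L[ℝ] F := ContinuousLinearEquiv.ulift
  have he : (fun x => ∫ u in a..b, f (x, u)) = fun x => e (∫ u in a..b, e.symm (f (x, u))) := by
    funext x
    simp_rw [intervalIntegral, ContinuousLinearEquiv.integral_comp_comm, map_sub,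
      ContinuousLinearEquiv.apply_symm_apply]
  rw [he, contDiff_iff_forall_nat_le]
  exact fun m hm => e.contDiff.comp <|
    contDiff_parametric_intervalIntegral_aux a b m (e.symm.contDiff.comp (hf.of_le (mod_cast hm)))

end ParametricIntegral

section HadamardQuotient

variable {E F : Type*} [NormedAddCommGroup E] [NormedSpace ℝ E]
  [NormedAddCommGroup F] [NormedSpace ℝ F]

noncomputable def hadamardQuotient (ν : E × ℝ → F) (p : E × ℝ) : F :=
  ∫ s in (0 : ℝ)..1, fderiv ℝ ν (p.1, p.2 * s) (0, 1)

theorem contDiff_hadamardQuotient {n : ℕ∞} {ν : E × ℝ → F} (hν : ContDiff ℝ (n + 1) ν) :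
    ContDiff ℝ n (hadamardQuotient ν) := by
  have hdν : ContDiff ℝ n fun p => fderiv ℝ ν p (0, 1) :=
    (hν.fderiv_right le_rfl).clm_apply contDiff_const
  have hscale : ContDiff ℝ n fun q : (E × ℝ) × ℝ => (q.1.1, q.1.2 * q.2) := by fun_prop
  exact contDiff_parametric_intervalIntegral (hdν.comp hscale) 0 1

theorem hasDerivAt_apply_prodMk_right {ν : E × ℝ → F} {x : E} {t : ℝ}
    (hν : DifferentiableAt ℝ ν (x, t)) :
    HasDerivAt (fun s => ν (x, s)) (fderiv ℝ ν (x, t) (0, 1)) t :=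
  hν.hasFDerivAt.comp_hasDerivAt t ((hasDerivAt_const t x).prodMk (hasDerivAt_id t))

theorem apply_eq_add_smul_hadamardQuotient [CompleteSpace F] {ν : E × ℝ → F}
    (hν : ContDiff ℝ 1 ν) (x : E) (t : ℝ) :
    ν (x, t) = ν (x, 0) + t • hadamardQuotient ν (x, t) := by
  have hdν : Continuous fun s => fderiv ℝ ν (x, s) (0, 1) := by
    have := hν.continuous_fderiv one_ne_zero
    fun_prop
  rw [hadamardQuotient, intervalIntegral.smul_integral_comp_mul_left
      (fun s => fderiv ℝ ν (x, s) (0, 1)), mul_zero, mul_one,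
    intervalIntegral.integral_eq_sub_of_hasDerivAt
      (fun s _ => hasDerivAt_apply_prodMk_right (hν.differentiable one_ne_zero (x, s)))
      (hdν.intervalIntegrable 0 t)]
  abel

end HadamardQuotient

theorem iteratedDeriv_succ_fun_id_smul_zero {𝕜 F : Type*} [NontriviallyNormedField 𝕜]
    [NormedAddCommGroup F] [NormedSpace 𝕜 F] {g : 𝕜 → F} {k : ℕ}
    (hg : ContDiffAt 𝕜 (k + 1) g 0) :
    iteratedDeriv (k + 1) (fun t => t • g t) 0 = (k + 1) • iteratedDeriv k g 0 := by
  have hLeibniz := iteratedDerivWithin_smul (mem_univ 0) uniqueDiffOn_univ (f := id)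
    contDiffAt_id.contDiffWithinAt hg.contDiffWithinAt
  simp only [iteratedDerivWithin_univ] at hLeibniz
  rw [show (fun t => t • g t) = (id : 𝕜 → 𝕜) • g from rfl, hLeibniz, Finset.sum_eq_single 1]
  · simp [iteratedDeriv_id]
  · intro i _ hi
    simp [iteratedDeriv_id, hi]
  · simp

theorem hadamard_lemma_pow_general {E F : Type*} [NormedAddCommGroup E] [NormedSpace ℝ E]
    [NormedAddCommGroup F] [NormedSpace ℝ F] [CompleteSpace F]
    (n : ℕ)
    (ν : E × ℝ → F) (hν : ContDiff ℝ ∞ ν)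
    (h0 : ∀ (x : E) (k : ℕ), k < n → iteratedDeriv k (fun t : ℝ => ν (x, t)) 0 = 0) :
    ∃ ν' : E × ℝ → F, ContDiff ℝ ∞ ν' ∧
      ∀ (x : E) (t : ℝ), ν (x, t) = t ^ n • ν' (x, t) := by
  induction n generalizing ν with
  | zero => exact ⟨ν, hν, fun x t => by rw [pow_zero, one_smul]⟩
  | succ n ih =>
    set ν₁ := hadamardQuotient ν
    have hν₁ : ContDiff ℝ ∞ ν₁ := contDiff_hadamardQuotient (hν.of_le (by simp))
    have hν_eq (x : E) (t : ℝ) : ν (x, t) = t • ν₁ (x, t) := by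
      have hν0 : ν (x, 0) = 0 := by simpa using h0 x 0 n.succ_pos
      rw [apply_eq_add_smul_hadamardQuotient (hν.of_le (by simp)) x t, hν0, zero_add]
    have h0₁ (x : E) (k : ℕ) (hk : k < n) : iteratedDeriv k (fun t => ν₁ (x, t)) 0 = 0 := by
      have hsucc := iteratedDeriv_succ_fun_id_smul_zero (k := k) (g := fun t => ν₁ (x, t))
        ((hν₁.comp (contDiff_const.prodMk contDiff_id)).contDiffAt.of_le (mod_cast le_top))
      rw [← funext (hν_eq x), h0 x (k + 1) (by omega), ← Nat.cast_smul_eq_nsmul ℝ] at hsucc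
      exact (smul_eq_zero.mp hsucc.symm).resolve_left (Nat.cast_ne_zero.mpr k.succ_ne_zero)
    obtain ⟨ν', hν', hν₁_eq⟩ := ih ν₁ hν₁ h0₁
    exact ⟨ν', hν', fun x t => by rw [hν_eq, hν₁_eq, smul_smul, ← pow_succ']⟩

/-- Higher-order Hadamard lemma: if a smooth map `ν : E × ℝ → F` vanishes to
order `n - 1` at `t = 0` (all iterated `t`-derivatives of order `< n` vanish
at `0`), then `ν = t ^ n • ν'` for a smooth `ν'`. -/
theorem hadamard_lemma_pow {E F : Type*} [NormedAddCommGroup E] [NormedSpace ℝ E]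
    [NormedAddCommGroup F] [NormedSpace ℝ F] [CompleteSpace F]
    (n : ℕ) (hn : 0 < n)
    (ν : E × ℝ → F) (hν : ContDiff ℝ ∞ ν)
    (h0 : ∀ (x : E) (k : ℕ), k < n → iteratedDeriv k (fun t : ℝ => ν (x, t)) 0 = 0) :
    ∃ ν' : E × ℝ → F, ContDiff ℝ ∞ ν' ∧
      ∀ (x : E) (t : ℝ), ν (x, t) = t ^ n • ν' (x, t) :=
  hadamard_lemma_pow_general n ν hν h0
end

section
/- Exponential perturbation step in the proof of Lemma 7.2 ('if mv ∉ V(h) ⊕ V_i(h) for all nonzero v ∈ V(h), then for t > 0 small enough e^{tm} V(h) ∩ ⊕V_i(h) = 0'): Let Y be a complex Banach space, let m : Y →L[ℂ] Y be a continuous linear operator, and let V and W be finite-dimensional subspaces of Y such that for every v ∈ V with v ≠ 0 one has m v ∉ V ⊔ W. Then there exists ε > 0 such that for every real t with 0 < t < ε and every v ∈ V, if exp((t : ℂ) • m) v ∈ W then v = 0. -/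
/-!
Write `exp (t • m) = 1 + t • A t`, where the difference quotient `A t` tends to `m` in operator
norm as `t → 0`. Since the unit sphere of `V` is compact and `V ⊔ W` is closed, the condition
"`A v ∉ V ⊔ W` for every nonzero `v ∈ V`" is open in `A`, so it passes from `m` to `A t` for
small `t`. If `exp (t • m) v ∈ W` for some `v ∈ V`, then `A t v = t⁻¹ • (exp (t • m) v - v)`
lies in `V ⊔ W`, which forces `v = 0`.
-/

open Filter Topology NormedSpace

section OpenCondition

variable {𝕜 E F : Type*}

theorem IsCompact.eventually_forall_apply_notMem [NontriviallyNormedField 𝕜]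
    [SeminormedAddCommGroup E] [NormedSpace 𝕜 E] [SeminormedAddCommGroup F] [NormedSpace 𝕜 F]
    {K : Set E} (hK : IsCompact K) {C : Set F} (hC : IsClosed C) {A : E →L[𝕜] F}
    (hA : ∀ v ∈ K, A v ∉ C) : ∀ᶠ B in 𝓝 A, ∀ v ∈ K, B v ∉ C :=
  hK.eventually_forall_of_forall_eventually fun v hv =>
    (hC.isOpen_compl.preimage (continuous_fst.clm_apply continuous_snd)).mem_nhds (hA v hv)

theorem Submodule.eventually_forall_ne_zero_apply_notMem [RCLike 𝕜]
    [NormedAddCommGroup E] [NormedSpace 𝕜 E] [SeminormedAddCommGroup F] [NormedSpace 𝕜 F]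
    {V : Submodule 𝕜 E} [FiniteDimensional 𝕜 V] {C : Submodule 𝕜 F}
    (hC : IsClosed (C : Set F)) {A : E →L[𝕜] F} (hA : ∀ v ∈ V, v ≠ 0 → A v ∉ C) :
    ∀ᶠ B in 𝓝 A, ∀ v ∈ V, v ≠ 0 → B v ∉ C := by
  have hK : IsCompact ((↑) '' Metric.sphere (0 : V) 1 : Set E) :=
    (isCompact_sphere 0 1).image continuous_subtype_val
  have hAK : ∀ u ∈ (↑) '' Metric.sphere (0 : V) 1, A u ∉ C := by
    rintro _ ⟨w, hw, rfl⟩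
    exact hA w w.2 (by rintro h; simp [Submodule.coe_eq_zero.1 h] at hw)
  filter_upwards [hK.eventually_forall_apply_notMem hC hAK] with B hB v hv hv0 hBv
  have hunit : ((‖v‖⁻¹ : 𝕜) • v : E) ∈ (↑) '' Metric.sphere (0 : V) 1 :=
    ⟨⟨_, V.smul_mem _ hv⟩, by simp [norm_smul, hv0], rfl⟩
  exact hB _ hunit (by simpa only [map_smul, SetLike.mem_coe] using C.smul_mem _ hBv)

end OpenCondition

theorem tendsto_inv_smul_exp_smul_sub_one {𝕂 𝔸 : Type*} [RCLike 𝕂] [NormedRing 𝔸]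
    [NormedAlgebra 𝕂 𝔸] [CompleteSpace 𝔸] (a : 𝔸) :
    Tendsto (fun t : 𝕂 => t⁻¹ • (exp (t • a) - 1)) (𝓝[≠] 0) (𝓝 a) := by
  simpa using (hasDerivAt_exp_smul_const' a (0 : 𝕂)).tendsto_slope_zero

/-- Exponential perturbation step in the proof of Lemma 7.2: if `m` maps every
nonzero `v ∈ V` outside `V ⊔ W`, then for `t > 0` small enough the subspace
`exp (t • m) V` meets `W` only in `0`. -/
theorem exp_smul_inter_eq_bot {Y : Type*} [NormedAddCommGroup Y] [NormedSpace ℂ Y]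
    [CompleteSpace Y] (m : Y →L[ℂ] Y) (V W : Submodule ℂ Y)
    [FiniteDimensional ℂ V] [FiniteDimensional ℂ W]
    (hm : ∀ v ∈ V, v ≠ 0 → m v ∉ V ⊔ W) :
    ∃ ε : ℝ, 0 < ε ∧ ∀ t : ℝ, 0 < t → t < ε → ∀ v ∈ V,
      (NormedSpace.exp ((t : ℂ) • m)) v ∈ W → v = 0 := by
  have hclosed : IsClosed ((V ⊔ W : Submodule ℂ Y) : Set Y) :=
    Submodule.closed_of_finiteDimensional _
  have hquot := ((tendsto_inv_smul_exp_smul_sub_one (𝕂 := ℝ) m).mono_left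
    (nhdsGT_le_nhdsNE 0)).eventually (V.eventually_forall_ne_zero_apply_notMem hclosed hm)
  obtain ⟨ε, hε, hsmall⟩ := mem_nhdsGT_iff_exists_Ioo_subset.1 hquot
  refine ⟨ε, hε, fun t ht0 htε v hv hexp => ?_⟩
  by_contra hv0
  refine hsmall ⟨ht0, htε⟩ v hv hv0 ?_
  rw [Complex.coe_smul] at hexp
  simp only [smul_apply, sub_apply, one_apply_eq_self]
  exact (V ⊔ W).smul_of_tower_mem _
    (sub_mem (Submodule.mem_sup_right hexp) (Submodule.mem_sup_left hv))
end

section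
/- Embedding step in the proof of Claim 8.11 (the indices x_k = 3/8 − 2^{−dim V_k − 2}(1 + 1/(n_k + 2)) satisfy x_k > sup_{j ≺ k} x_j): Let S be a type with a linear order and d : S → ℕ a function such that (i) d j < d i implies j < i, and (ii) for every i the set {j | j ≤ i and d j = d i} is finite; let n i denote the cardinality of this finite set, and define x i := 3/8 − 2^(−(d i : ℤ) − 2) * (1 + 1/(n i + 2)) ∈ ℝ. Then: (a) 0 < x i < 3/8 for every i; (b) x is strictly monotone, i.e. j < i implies x j < x i; and (c) for every i ∈ S, sSup (x '' {j | j < i}) < x i (using Mathlib's real supremum, which is 0 on the empty set). -/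
/-!
With `embedIndex d t = 3/8 - 2^(-d-2) (1 + 1/t)`, increasing in `t > 0`, we have
`x i = embedIndex (d i) (n i + 2)`, and every `j < i` satisfies
`x j ≤ embedIndex (d i) (n i + 1) < x i`: on the same level `n j < n i`, and a whole lower level
lies below `3/8 - 2^(-d i - 1) ≤ embedIndex (d i) (n i + 1)`. Since `n i ≥ 1` this middle bound is
nonnegative, so it also bounds `sSup (x '' {j | j < i})` when that set is empty (`sSup ∅ = 0`).
-/

section LevelPrefix

variable {S α : Type*} [Preorder S] (d : S → α)

def levelPrefix (i : S) : Set S := {j | j ≤ i ∧ d j = d i}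

lemma one_le_card_levelPrefix {i : S} (hfin : (levelPrefix d i).Finite) :
    1 ≤ Nat.card (levelPrefix d i) := by
  have := hfin.to_subtype
  have : Nonempty (levelPrefix d i) := ⟨⟨i, le_rfl, rfl⟩⟩
  exact Nat.card_pos

lemma card_levelPrefix_lt {i j : S} (hji : j < i) (hdji : d j = d i)
    (hfin : (levelPrefix d i).Finite) :
    Nat.card (levelPrefix d j) < Nat.card (levelPrefix d i) := by
  rw [Nat.card_coe_set_eq, Nat.card_coe_set_eq]
  refine Set.ncard_lt_ncard ⟨fun k hk => ⟨hk.1.trans hji.le, hk.2.trans hdji⟩, fun hsub => ?_⟩ hfin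
  exact hji.not_ge (hsub ⟨le_rfl, rfl⟩).1

end LevelPrefix

section EmbedIndex

noncomputable def embedIndex (d : ℕ) (t : ℝ) : ℝ := 3 / 8 - (2 : ℝ) ^ (-(d : ℤ) - 2) * (1 + 1 / t)

lemma two_zpow_neg_sub_two_le (d : ℕ) : (2 : ℝ) ^ (-(d : ℤ) - 2) ≤ 1 / 4 := by
  calc (2 : ℝ) ^ (-(d : ℤ) - 2) ≤ (2 : ℝ) ^ (-2 : ℤ) := zpow_le_zpow_right₀ one_le_two (by omega)
    _ = 1 / 4 := by norm_num

lemma embedIndex_strictMonoOn (d : ℕ) : StrictMonoOn (embedIndex d) (Set.Ioi 0) := by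
  intro s hs t _ hst
  have : 1 / t < 1 / s := one_div_lt_one_div_of_lt hs hst
  unfold embedIndex
  nlinarith [zpow_pos (two_pos (α := ℝ)) (-(d : ℤ) - 2)]

lemma embedIndex_lt_three_eighths (d : ℕ) {t : ℝ} (ht : 0 < t) : embedIndex d t < 3 / 8 := by
  unfold embedIndex
  have := zpow_pos (two_pos (α := ℝ)) (-(d : ℤ) - 2)
  have : 0 < 1 / t := one_div_pos.mpr ht
  nlinarith

lemma embedIndex_two_nonneg (d : ℕ) : 0 ≤ embedIndex d 2 := by
  unfold embedIndex
  nlinarith [two_zpow_neg_sub_two_le d]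

lemma embedIndex_nonneg (d : ℕ) {t : ℝ} (ht : 2 ≤ t) : 0 ≤ embedIndex d t :=
  (embedIndex_two_nonneg d).trans <|
    (embedIndex_strictMonoOn d).monotoneOn (by norm_num : (2 : ℝ) ∈ Set.Ioi 0)
      (lt_of_lt_of_le two_pos ht) ht

lemma embedIndex_pos (d : ℕ) {t : ℝ} (ht : 2 < t) : 0 < embedIndex d t :=
  (embedIndex_two_nonneg d).trans_lt <|
    embedIndex_strictMonoOn d (by norm_num : (2 : ℝ) ∈ Set.Ioi 0) (two_pos.trans ht) ht

lemma embedIndex_lt_embedIndex_of_lt {d e : ℕ} (hde : d < e) {s t : ℝ} (hs : 0 < s)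
    (ht : 1 ≤ t) : embedIndex d s < embedIndex e t := by
  have hdouble : (2 : ℝ) ^ (-(e : ℤ) - 2) * 2 ≤ (2 : ℝ) ^ (-(d : ℤ) - 2) := by
    rw [← zpow_add_one₀ two_ne_zero]
    exact zpow_le_zpow_right₀ one_le_two (by omega)
  have : 1 / t ≤ 1 := by rw [div_le_one (by linarith)]; exact ht
  have : 0 < 1 / s := one_div_pos.mpr hs
  unfold embedIndex
  nlinarith [zpow_pos (two_pos (α := ℝ)) (-(e : ℤ) - 2), zpow_pos (two_pos (α := ℝ)) (-(d : ℤ) - 2)]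

end EmbedIndex

/-- Embedding step in the proof of Claim 8.11: the real numbers
`x i = 3/8 - 2 ^ (-(d i) - 2) * (1 + 1/(n i + 2))` lie in `(0, 3/8)`, are
strictly monotone in `i`, and each `x i` strictly exceeds the supremum of the
`x j` with `j < i`. -/
theorem xk_gt_sup_of_preceding {S : Type*} [LinearOrder S] (d : S → ℕ)
    (hd : ∀ i j : S, d j < d i → j < i)
    (hfin : ∀ i : S, {j : S | j ≤ i ∧ d j = d i}.Finite)
    (n : S → ℕ) (hn : ∀ i : S, n i = Nat.card {j : S | j ≤ i ∧ d j = d i})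
    (x : S → ℝ)
    (hx : ∀ i : S,
      x i = 3 / 8 - (2 : ℝ) ^ (-(d i : ℤ) - 2) * (1 + 1 / ((n i : ℝ) + 2))) :
    (∀ i : S, 0 < x i ∧ x i < 3 / 8) ∧
      StrictMono x ∧
      ∀ i : S, sSup (x '' {j : S | j < i}) < x i := by
  have hn1 (i : S) : (1 : ℝ) ≤ n i := by
    exact_mod_cast (hn i).symm ▸ one_le_card_levelPrefix d (hfin i)
  have hbelow {i j : S} (hji : j < i) : x j ≤ embedIndex (d i) (n i + 1) := by
    rw [hx j]
    rcases lt_trichotomy (d j) (d i) with h | h | h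
    · exact (embedIndex_lt_embedIndex_of_lt h (by positivity) (by linarith [hn1 i])).le
    · have hnji : (n j : ℝ) + 1 ≤ n i := by
        exact_mod_cast (hn i).symm ▸ (hn j).symm ▸ card_levelPrefix_lt d hji h (hfin i)
      rw [h]
      exact (embedIndex_strictMonoOn (d i)).monotoneOn (Set.mem_Ioi.mpr (by positivity))
        (Set.mem_Ioi.mpr (by positivity)) (by linarith)
    · exact absurd (hd j i h) hji.asymm
  have hgap (i : S) : embedIndex (d i) (n i + 1) < x i :=
    (hx i).symm ▸ embedIndex_strictMonoOn (d i) (Set.mem_Ioi.mpr (by positivity))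
      (Set.mem_Ioi.mpr (by positivity)) (by linarith)
  refine ⟨fun i => ?_, fun j i hji => (hbelow hji).trans_lt (hgap i), fun i => ?_⟩
  · rw [hx i]
    exact ⟨embedIndex_pos (d i) (by linarith [hn1 i]),
      embedIndex_lt_three_eighths (d i) (by positivity)⟩
  · refine (Real.sSup_le ?_ (embedIndex_nonneg (d i) (by linarith [hn1 i]))).trans_lt (hgap i)
    rintro _ ⟨j, hj, rfl⟩
    exact hbelow hj
end
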